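/- Let d ≥ 1 be an integer and β, ε > 0 with ε < β/(64d²). Let (d_{ij})_{0≤i<j≤d} be real numbers with β − ε ≤ d_{ij} ≤ β + ε for all i<j. Then there exist d+1 affinely independent points x_0,…,x_d ∈ ℝ^d with ‖x_i − x_j‖ = d_{ij} for all 0 ≤ i < j ≤ d. -/

import Mathlib

/-!
Put `x 0 = 0`. The other points must then be vectors with Gram matrix
`G i j = (d₀ᵢ² + d₀ⱼ² - dᵢⱼ²) / 2`. For almost regular distances `G` is entrywise
within `η = 3/2 (2βε + ε²)` of `β²/2 (I + J)`, whose quadratic form is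
`β²/2 (‖v‖² + (∑ vᵢ)²)`. An entrywise `η`-perturbation changes the form by at most
`d η ‖v‖²`, so `G` is positive definite as soon as `d η < β²/2`. Its square root then
provides `d` linearly independent vectors with Gram matrix `G`, i.e. with the prescribed
mutual distances, and together with `0` they span a nondegenerate simplex.
-/

open Matrix Finset

theorem Matrix.abs_dotProduct_mulVec_le {ι : Type*} [Fintype ι] {H : Matrix ι ι ℝ} {η : ℝ}
    (hH : ∀ i j, |H i j| ≤ η) (x : ι → ℝ) :
    |x ⬝ᵥ H *ᵥ x| ≤ Fintype.card ι * η * (x ⬝ᵥ x) := by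
  cases isEmpty_or_nonempty ι
  · simp
  have hη : 0 ≤ η := (abs_nonneg _).trans (hH (Classical.arbitrary ι) (Classical.arbitrary ι))
  calc |x ⬝ᵥ H *ᵥ x| = |∑ i, ∑ j, x i * H i j * x j| := by
        simp only [dotProduct, mulVec, mul_sum, mul_assoc]
    _ ≤ ∑ i, ∑ j, |x i| * η * |x j| := by
        refine (abs_sum_le_sum_abs _ _).trans (sum_le_sum fun i _ => ?_)
        refine (abs_sum_le_sum_abs _ _).trans (sum_le_sum fun j _ => ?_)
        rw [abs_mul, abs_mul]
        gcongr
        exact hH i j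
    _ = η * (∑ i, |x i|) ^ 2 := by
        simp only [sq, sum_mul, mul_sum]
        exact sum_congr rfl fun i _ => sum_congr rfl fun j _ => by ring
    _ ≤ η * (Fintype.card ι * ∑ i, |x i| ^ 2) := by
        gcongr
        exact sq_sum_le_card_mul_sum_sq
    _ = Fintype.card ι * η * (x ⬝ᵥ x) := by
        simp only [dotProduct, sq_abs, ← sq]
        ring

theorem Matrix.posDef_of_abs_sub_le {ι : Type*} [Fintype ι] [DecidableEq ι]
    {G : Matrix ι ι ℝ} (hG : G.IsSymm) {b η : ℝ}
    (hnear : ∀ i j, |(G - b • (1 + of fun _ _ => 1 : Matrix ι ι ℝ)) i j| ≤ η)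
    (hη : Fintype.card ι * η < b) : G.PosDef := by
  refine .of_dotProduct_mulVec_pos hG fun x hx => ?_
  set A : Matrix ι ι ℝ := 1 + of fun _ _ => 1
  have hA : x ⬝ᵥ A *ᵥ x = x ⬝ᵥ x + (∑ i, x i) ^ 2 := by
    rw [add_mulVec, one_mulVec, dotProduct_add]
    simp [mulVec, dotProduct, sq, sum_mul]
  have hquad : x ⬝ᵥ G *ᵥ x = b * (x ⬝ᵥ A *ᵥ x) + x ⬝ᵥ (G - b • A) *ᵥ x := by
    simp [sub_mulVec, smul_mulVec, dotProduct_sub]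
  have hxx : 0 < x ⬝ᵥ x := by simpa using dotProduct_self_star_pos_iff.mpr hx
  have herr := abs_le.mp (abs_dotProduct_mulVec_le hnear x)
  obtain ⟨i, -⟩ := Function.ne_iff.mp hx
  have hb : 0 ≤ b := by
    have hη₀ := (abs_nonneg _).trans (hnear i i)
    linarith [mul_nonneg (Nat.cast_nonneg (Fintype.card ι)) hη₀]
  rw [star_trivial, hquad, hA]
  nlinarith [mul_lt_mul_of_pos_right hη hxx, mul_nonneg hb (sq_nonneg (∑ i, x i))]

theorem Matrix.PosSemidef.exists_gram_eq {ι : Type*} [Fintype ι]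
    {G : Matrix ι ι ℝ} (hG : G.PosSemidef) :
    ∃ y : ι → EuclideanSpace ℝ ι, gram ℝ y = G := by
  classical
  open scoped MatrixOrder in
  obtain ⟨B, hB, rfl⟩ : ∃ B : Matrix ι ι ℝ, B.IsHermitian ∧ G = B * B :=
    ⟨CFC.sqrt G, (CFC.sqrt_nonneg G).posSemidef.isHermitian,
      (CFC.sqrt_mul_sqrt_self G hG.nonneg).symm⟩
  refine ⟨fun i => WithLp.toLp 2 (B i), ?_⟩
  ext i j
  simp only [gram_apply, mul_apply, PiLp.inner_apply]
  refine sum_congr rfl fun k _ => ?_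
  rw [← hB.apply j k]
  simp [mul_comm]

theorem affineIndependent_cons_zero_iff {k V : Type*} [Ring k] [AddCommGroup V] [Module k V]
    {n : ℕ} {y : Fin n → V} :
    AffineIndependent k (Fin.cons 0 y : Fin (n + 1) → V) ↔ LinearIndependent k y := by
  rw [affineIndependent_iff_linearIndependent_vsub k _ 0,
    ← linearIndependent_equiv (finSuccAboveEquiv (0 : Fin (n + 1)))]
  convert Iff.rfl
  ext i
  simp [finSuccAboveEquiv_apply, Fin.zero_succAbove]

theorem abs_sq_sub_sq_le_of_abs_sub_le {t β ε : ℝ} (hβ : 0 ≤ β) (h : |t - β| ≤ ε) :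
    |t ^ 2 - β ^ 2| ≤ 2 * β * ε + ε ^ 2 := by
  obtain ⟨h₁, h₂⟩ := abs_le.mp h
  rw [abs_le]
  constructor <;> nlinarith [sq_nonneg (t - β), mul_le_mul_of_nonneg_left h₁ hβ]

/-- If `m i j = ‖x i - x j‖ ^ 2`, this is the Gram matrix of the vectors `x (i + 1) - x 0`
(polarization). -/
noncomputable def gramOfSqDist {n : ℕ} (m : Matrix (Fin (n + 1)) (Fin (n + 1)) ℝ) :
    Matrix (Fin n) (Fin n) ℝ :=
  of fun i j => (m 0 i.succ + m 0 j.succ - m i.succ j.succ) / 2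

theorem isSymm_gramOfSqDist {n : ℕ} {m : Matrix (Fin (n + 1)) (Fin (n + 1)) ℝ}
    (hm : m.IsSymm) : (gramOfSqDist m).IsSymm :=
  Matrix.ext fun i j => by simp [gramOfSqDist, hm.apply, add_comm]

theorem abs_gramOfSqDist_sub_le {n : ℕ} {m : Matrix (Fin (n + 1)) (Fin (n + 1)) ℝ}
    (hm₀ : ∀ i, m i i = 0) {s δ : ℝ} (hm : ∀ i j, i ≠ j → |m i j - s| ≤ δ) (i j : Fin n) :
    |(gramOfSqDist m - (s / 2) • (1 + of fun _ _ => 1 : Matrix (Fin n) (Fin n) ℝ)) i j| ≤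
      3 / 2 * δ := by
  have h0 (i : Fin n) := abs_le.mp (hm 0 i.succ (Fin.succ_ne_zero i).symm)
  rcases eq_or_ne i j with rfl | hij
  · have hδ : 0 ≤ δ := (abs_nonneg _).trans (hm 0 i.succ (Fin.succ_ne_zero i).symm)
    simp only [gramOfSqDist, Matrix.sub_apply, Matrix.smul_apply, Matrix.add_apply, of_apply,
      one_apply_eq, hm₀, smul_eq_mul]
    rw [abs_le]
    constructor <;> linarith [h0 i]
  · have hc := abs_le.mp (hm i.succ j.succ (Fin.succ_injective _ |>.ne hij))
    simp only [gramOfSqDist, Matrix.sub_apply, Matrix.smul_apply, Matrix.add_apply, of_apply,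
      one_apply_ne hij, smul_eq_mul]
    rw [abs_le]
    constructor <;> linarith [h0 i, h0 j]

theorem exists_affineIndependent_dist_sq_eq {n : ℕ} {m : Matrix (Fin (n + 1)) (Fin (n + 1)) ℝ}
    (hm : m.IsSymm) (hm₀ : ∀ i, m i i = 0) (hG : (gramOfSqDist m).PosDef) :
    ∃ x : Fin (n + 1) → EuclideanSpace ℝ (Fin n),
      AffineIndependent ℝ x ∧ ∀ i j, dist (x i) (x j) ^ 2 = m i j := by
  obtain ⟨y, hy⟩ := hG.posSemidef.exists_gram_eq
  have hinner (i j : Fin n) : inner ℝ (y i) (y j) = gramOfSqDist m i j := by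
    rw [← hy, gram_apply]
  have hnorm (i : Fin n) : ‖y i‖ ^ 2 = m 0 i.succ := by
    rw [← real_inner_self_eq_norm_sq, hinner]
    simp [gramOfSqDist, hm₀]
  refine ⟨Fin.cons 0 y,
    affineIndependent_cons_zero_iff.2 (linearIndependent_of_posDef_gram (hy ▸ hG)), ?_⟩
  intro i j
  cases i using Fin.cases <;> cases j using Fin.cases
  · simp [hm₀]
  · simp [hnorm]
  · simp [hnorm, hm.apply]
  · rw [Fin.cons_succ, Fin.cons_succ, dist_eq_norm, norm_sub_sq_real, hnorm, hnorm, hinner]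
    simp only [gramOfSqDist, of_apply]
    ring

theorem almost_regular_simplex_realizable_general
    (d : ℕ) (β ε : ℝ) (hβ : 0 < β) (hε : 0 < ε)
    (hεβ : ε < β / (64 * (d : ℝ)^2))
    (D : Fin (d+1) → Fin (d+1) → ℝ)
    (hD : ∀ i j : Fin (d+1), i < j → β - ε ≤ D i j ∧ D i j ≤ β + ε) :
    ∃ x : Fin (d+1) → EuclideanSpace ℝ (Fin d),
      AffineIndependent ℝ x ∧ ∀ i j : Fin (d+1), i < j → dist (x i) (x j) = D i j := by
  have hd : (1 : ℝ) ≤ d := by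
    rcases Nat.eq_zero_or_pos d with rfl | hd_pos
    · -- `β / 0 = 0`, so `hεβ` reads `ε < 0`
      exact absurd hεβ (by simpa using hε.le)
    · exact_mod_cast hd_pos
  have h64 : 64 * d ^ 2 * ε < β := by rwa [lt_div_iff₀ (by positivity), mul_comm] at hεβ
  have hε_lt : ε < β := by
    nlinarith [mul_le_mul_of_nonneg_right (one_le_pow₀ hd : (1 : ℝ) ≤ d ^ 2) hε.le]
  have hsmall : (d : ℝ) * (3 / 2 * (2 * β * ε + ε ^ 2)) < β ^ 2 / 2 := by nlinarith
  -- only the entries `D i j` with `i < j` are prescribed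
  set m : Matrix (Fin (d + 1)) (Fin (d + 1)) ℝ :=
    of fun i j => if i = j then 0 else D (min i j) (max i j) ^ 2
  have hm : m.IsSymm := Matrix.ext fun i j => by simp [m, eq_comm, min_comm, max_comm]
  have hm_near (i j) (hij : i ≠ j) : |m i j - β ^ 2| ≤ 2 * β * ε + ε ^ 2 := by
    obtain ⟨h₁, h₂⟩ := hD _ _ (min_lt_max.2 hij)
    simpa [m, hij] using
      abs_sq_sub_sq_le_of_abs_sub_le hβ.le (abs_sub_le_iff.2 ⟨by linarith, by linarith⟩)
  have hG : (gramOfSqDist m).PosDef :=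
    posDef_of_abs_sub_le (isSymm_gramOfSqDist hm) (abs_gramOfSqDist_sub_le (by simp [m]) hm_near)
      (by rwa [Fintype.card_fin])
  obtain ⟨x, hx, hdist⟩ := exists_affineIndependent_dist_sq_eq hm (by simp [m]) hG
  refine ⟨x, hx, fun i j hij => ?_⟩
  rw [← pow_left_inj₀ dist_nonneg (by linarith [(hD i j hij).1]) two_ne_zero, hdist]
  simp [m, hij.ne, hij.le]

/-- Almost regular distance matrices are realizable: if all prescribed distances `d_{ij}` lie in
`[β - ε, β + ε]` with `0 < ε < β/(64 d²)`, then there is a nondegenerate `d`-dimensional simplex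
in `ℝ^d` realizing them. -/
theorem almost_regular_simplex_realizable
    (d : ℕ) (hd : 1 ≤ d) (β ε : ℝ) (hβ : 0 < β) (hε : 0 < ε)
    (hεβ : ε < β / (64 * (d : ℝ)^2))
    (D : Fin (d+1) → Fin (d+1) → ℝ)
    (hD : ∀ i j : Fin (d+1), i < j → β - ε ≤ D i j ∧ D i j ≤ β + ε) :
    ∃ x : Fin (d+1) → EuclideanSpace ℝ (Fin d),
      AffineIndependent ℝ x ∧ ∀ i j : Fin (d+1), i < j → dist (x i) (x j) = D i j :=
  almost_regular_simplex_realizable_general d β ε hβ hε hεβ D hD
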